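/- Let d ≥ 4 and t = −1/(d−1). Define A₁,…,A_d ∈ M_d(ℂ) by (A_m)_{mm} = t, (A_m)_{jk} = 0 when exactly one of j,k equals m, (A_m)_{jj} = (3−d)/(d−1) for j ≠ m, and (A_m)_{jk} = 2/(d−1) for j ≠ k with j,k ≠ m. Then: (a) the family {A_m²}_{m=1}^d is linearly independent over ℂ; and (b) for every choice of pairwise distinct indices j, k, m, n ∈ {1,…,d}: [A_j,A_k] + [A_k,A_m] + [A_m,A_j] = 0; [A_j,A_k] + [A_k,A_m] + [A_m,A_n] + [A_n,A_j] = 0; {A_j,A_k} − {A_k,A_m} + {A_m,A_n} − {A_n,A_j} = 0; and (A_j − A_m)(A_k − A_n) = 0. In particular each of the families {A_m A_n + A_n A_m}_{m<n} and {A_m A_n − A_n A_m}_{m<n} is linearly dependent. -/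

import Mathlib

/-!
Write `c = 2/(d−1)`, `e_m` for the standard basis vectors and `f_m = 𝟙 − e_m`, so that
`A_m = c f_m f_mᵀ + (t+1) e_m e_mᵀ − I`. Since `c (d−1) = 2`, the block `c f_m f_mᵀ − (I − e_m e_mᵀ)`
is a reflection of the complement of `e_m`, hence `A_m² = I + (t²−1) e_m e_mᵀ`; these are linearly
independent because `−1 < t² − 1 < 0`.

The difference `A_j − A_m` is `β diag(a) − c (a 𝟙ᵀ + 𝟙 aᵀ)` with `a = e_j − e_m` and `β = c + t + 1`.
For `a, b` of zero sum and disjoint supports the product of two such matrices is `c (c d − 2β) a bᵀ`,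
and `c d = 2β` is exactly the condition `t = −1/(d−1)`. So `(A_j − A_m)(A_k − A_n) = 0` whenever
`{j, m}` and `{k, n}` are disjoint, and the commutator and anticommutator relations are formal
consequences of these vanishing products; instantiated at the indices `0, 1, 2, 3` they are
nontrivial linear relations among the (anti)commutators.
-/

open Matrix

noncomputable section

def keyMatrix (d : ℕ) (t : ℝ) (m : Fin d) : Matrix (Fin d) (Fin d) ℂ :=
  Matrix.of fun j k =>
    if j = m ∧ k = m then (t : ℂ)
    else if j = m ∨ k = m then 0
    else if j = k then (((3 - (d : ℝ)) / ((d : ℝ) - 1) : ℝ) : ℂ)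
    else (((2 : ℝ) / ((d : ℝ) - 1) : ℝ) : ℂ)

section Commutators

variable {R : Type*} [Ring R] {a b c e : R}

theorem commutator_cycle4_eq_zero (h : Commute (a - c) (b - e)) :
    (a * b - b * a) + (b * c - c * b) + (c * e - e * c) + (e * a - a * e) = 0 := by
  rw [← sub_eq_zero.2 h.eq]
  noncomm_ring

theorem anticommutator_alternating_cycle4_eq_zero (h₁ : (a - c) * (b - e) = 0)
    (h₂ : (b - e) * (a - c) = 0) :
    (a * b + b * a) - (b * c + c * b) + (c * e + e * c) - (e * a + a * e) = 0 := by
  calc _ = (a - c) * (b - e) + (b - e) * (a - c) := by noncomm_ring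
    _ = 0 := by rw [h₁, h₂, add_zero]

theorem commutator_cycle3_eq_zero [IsAddTorsionFree R] (h₁ : Commute (a - c) (b - e))
    (h₂ : Commute (a - b) (e - c)) (h₃ : Commute (b - c) (e - a)) :
    (a * b - b * a) + (b * c - c * b) + (c * a - a * c) = 0 := by
  -- The sum is `⁅a - c, b - c⁆`; splitting `b - c`, `a - c` and again `b - c` along `e` and using
  -- the three commutations turns it into `⁅b - c, a - c⁆`, its own negative.
  have h : 2 • ((a * b - b * a) + (b * c - c * b) + (c * a - a * c)) =
      ⁅a - c, b - e⁆ + ⁅a - b, e - c⁆ + ⁅b - c, e - a⁆ := by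
    simp only [Ring.lie_def]
    noncomm_ring
  rw [commute_iff_lie_eq.1 h₁, commute_iff_lie_eq.1 h₂, commute_iff_lie_eq.1 h₃, add_zero,
    add_zero] at h
  exact (smul_eq_zero.1 h).resolve_left two_ne_zero

end Commutators

section KeyDiff

variable {n K : Type*} [DecidableEq n] [CommRing K]

def keyDiff (β c : K) (a : n → K) : Matrix n n K :=
  β • diagonal a - c • (vecMulVec a 1 + vecMulVec 1 a)

theorem keyDiff_apply (β c : K) (a : n → K) (p q : n) :
    keyDiff β c a p q = β * (if p = q then a p else 0) - c * (a p + a q) := by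
  simp only [keyDiff, Matrix.sub_apply, Matrix.smul_apply, Matrix.add_apply, diagonal_apply,
    vecMulVec_apply, Pi.one_apply, mul_one, one_mul, smul_eq_mul, mul_ite, mul_zero]

theorem keyDiff_mul_keyDiff [Fintype n] {β c : K} (h : c * Fintype.card n = 2 * β)
    {a b : n → K} (ha : ∑ i, a i = 0) (hb : ∑ i, b i = 0) (hab : a * b = 0) :
    keyDiff β c a * keyDiff β c b = 0 := by
  have hab' : ∀ i, a i * b i = 0 := congr_fun hab
  ext p q
  simp only [mul_apply, keyDiff_apply, Matrix.zero_apply, sub_mul, mul_sub, mul_add, add_mul, Finset.sum_sub_distrib, Finset.sum_add_distrib,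
    mul_ite, ite_mul, mul_zero, zero_mul, Finset.sum_ite_eq, Finset.sum_ite_eq', Finset.mem_univ,
    if_true, ← Finset.mul_sum, ← Finset.sum_mul, ha, hb, Finset.sum_const, Finset.card_univ]
  have hsum : ∑ x, c * a x * (c * b x) = 0 :=
    Finset.sum_eq_zero fun x _ => by linear_combination c ^ 2 * hab' x
  rw [hsum, nsmul_eq_mul]
  split_ifs with hpq
  · subst hpq
    linear_combination (c * a p * b p) * h + (β ^ 2 - 2 * β * c) * hab' p
  · linear_combination (c * a p * b q) * h - β * c * (hab' p + hab' q)

end KeyDiff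

theorem linearIndependent_one_add_smul_single {K n : Type*} [Field K] [Fintype n]
    [DecidableEq n] {μ : K} (hμ : μ ≠ 0) (hμn : μ + Fintype.card n ≠ 0) :
    LinearIndependent K fun i : n => (1 : Matrix n n K) + μ • single i i 1 := by
  rw [Fintype.linearIndependent_iff]
  intro g hg
  have hdiag : ∀ p, ∑ i, g i + μ * g p = 0 := fun p => by
    simpa [Matrix.sum_apply, Finset.sum_add_distrib, Matrix.one_apply, Matrix.single_apply,
      mul_comm] using congr_fun₂ hg p p
  have hsum : ∑ i, g i = 0 := by
    have := Finset.sum_eq_zero (s := Finset.univ) fun p _ => hdiag p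
    rw [Finset.sum_add_distrib, ← Finset.mul_sum, Finset.sum_const, Finset.card_univ,
      nsmul_eq_mul] at this
    have h : (μ + Fintype.card n) * ∑ i, g i = 0 := by linear_combination this
    exact (mul_eq_zero.1 h).resolve_left hμn
  intro p
  simpa [hsum, hμ] using hdiag p

section KeyMatrix

variable {d : ℕ}

theorem keyMatrix_eq (hd : 1 < d) (t : ℝ) (m : Fin d) :
    keyMatrix d t m = (2 / ((d : ℂ) - 1)) • vecMulVec (1 - Pi.single m 1) (1 - Pi.single m 1)
      + ((t : ℂ) + 1) • single m m 1 - 1 := by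
  have hd' : (d : ℂ) - 1 ≠ 0 := sub_ne_zero.2 (by exact_mod_cast hd.ne')
  have hdiag : (3 - (d : ℂ)) / ((d : ℂ) - 1) = 2 / ((d : ℂ) - 1) - 1 := by
    field_simp
    ring
  ext p q
  rw [single_eq_single_vecMulVec_single]
  simp only [keyMatrix, of_apply, Matrix.add_apply, Matrix.sub_apply, Matrix.smul_apply,
    vecMulVec_apply, Matrix.one_apply, Pi.sub_apply, Pi.one_apply, Pi.single_apply, smul_eq_mul]
  push_cast
  split_ifs <;> simp_all

theorem keyMatrix_mul_self (hd : 1 < d) (t : ℝ) (m : Fin d) :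
    keyMatrix d t m * keyMatrix d t m = 1 + ((t : ℂ) ^ 2 - 1) • single m m 1 := by
  have hd' : (d : ℂ) - 1 ≠ 0 := sub_ne_zero.2 (by exact_mod_cast hd.ne')
  rw [keyMatrix_eq hd]
  set f : Fin d → ℂ := 1 - Pi.single m 1
  set F := vecMulVec f f
  have hff : f ⬝ᵥ f = d - 1 := by
    simp [f, sub_dotProduct, dotProduct_sub, dotProduct_single, single_dotProduct]
  have hFF : F * F = ((d : ℂ) - 1) • F := by
    rw [vecMulVec_mul_vecMulVec, hff, vecMulVec_smul]
  have hFE : F * single m m 1 = 0 := by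
    rw [single_eq_single_vecMulVec_single, vecMulVec_mul_vecMulVec]
    simp [f, dotProduct_single]
  have hEF : single m m 1 * F = 0 := by
    rw [single_eq_single_vecMulVec_single, vecMulVec_mul_vecMulVec]
    simp [f, single_dotProduct]
  have hEE : single m m (1 : ℂ) * single m m 1 = single m m 1 := by
    rw [single_mul_single_same, mul_one]
  simp only [add_mul, mul_add, sub_mul, mul_sub, hFF, hFE, hEF, hEE, mul_one, one_mul,
    smul_zero, smul_mul_assoc, mul_smul_comm]
  have hc : 2 / ((d : ℂ) - 1) * ((d : ℂ) - 1) = 2 := div_mul_cancel₀ _ hd'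
  linear_combination (norm := module) (2 / ((d : ℂ) - 1)) • hc • F

theorem keyMatrix_sub_keyMatrix (hd : 1 < d) (t : ℝ) (j m : Fin d) :
    keyMatrix d t j - keyMatrix d t m =
      keyDiff (2 / ((d : ℂ) - 1) + t + 1) (2 / ((d : ℂ) - 1)) (Pi.single j 1 - Pi.single m 1) := by
  ext p q
  simp only [keyMatrix_eq hd, single_eq_single_vecMulVec_single, Matrix.add_apply,
    Matrix.sub_apply, Matrix.smul_apply, vecMulVec_apply, Matrix.one_apply, keyDiff_apply,
    Pi.sub_apply, Pi.one_apply, Pi.single_apply, smul_eq_mul]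
  split_ifs <;> simp_all <;> ring

local notation "𝒜" => keyMatrix d (-1 / ((d : ℝ) - 1))

theorem linearIndependent_keyMatrix_mul_self (hd : 2 < d) :
    LinearIndependent ℂ fun m : Fin d => 𝒜 m * 𝒜 m := by
  simp_rw [keyMatrix_mul_self (by omega : 1 < d)]
  have hd' : (2 : ℝ) < d := by exact_mod_cast hd
  have hsq : (-1 / ((d : ℝ) - 1)) ^ 2 < 1 := by
    rw [div_pow, neg_one_sq, div_lt_one (by nlinarith)]
    nlinarith
  refine linearIndependent_one_add_smul_single ?_ ?_
  · exact_mod_cast (by linarith : (-1 / ((d : ℝ) - 1)) ^ 2 - 1 < 0).ne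
  · rw [Fintype.card_fin]
    exact_mod_cast (by nlinarith : (-1 / ((d : ℝ) - 1)) ^ 2 - 1 + d > 0).ne'

theorem keyMatrix_sub_mul_keyMatrix_sub {j k m n : Fin d} (hjk : j ≠ k) (hjn : j ≠ n)
    (hmk : m ≠ k) (hmn : m ≠ n) : (𝒜 j - 𝒜 m) * (𝒜 k - 𝒜 n) = 0 := by
  have hd : 1 < d := by
    have := Fin.val_ne_of_ne hjk
    omega
  have hd' : (d : ℂ) - 1 ≠ 0 := sub_ne_zero.2 (by exact_mod_cast hd.ne')
  rw [keyMatrix_sub_keyMatrix hd, keyMatrix_sub_keyMatrix hd]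
  refine keyDiff_mul_keyDiff ?_ (by simp) (by simp) ?_
  · rw [Fintype.card_fin]
    push_cast
    field_simp
    ring
  · ext p
    simp only [Pi.mul_apply, Pi.sub_apply, Pi.single_apply, Pi.zero_apply]
    split_ifs <;> simp_all

theorem commute_keyMatrix_sub {j k m n : Fin d} (hjk : j ≠ k) (hjn : j ≠ n)
    (hmk : m ≠ k) (hmn : m ≠ n) : Commute (𝒜 j - 𝒜 m) (𝒜 k - 𝒜 n) :=
  (keyMatrix_sub_mul_keyMatrix_sub hjk hjn hmk hmn).trans
    (keyMatrix_sub_mul_keyMatrix_sub hjk.symm hmk.symm hjn.symm hmn.symm).symm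

theorem keyMatrix_commutator_cycle3 {j k m n : Fin d} (hjk : j ≠ k) (hjm : j ≠ m) (hjn : j ≠ n)
    (hkm : k ≠ m) (hkn : k ≠ n) (hmn : m ≠ n) :
    (𝒜 j * 𝒜 k - 𝒜 k * 𝒜 j) + (𝒜 k * 𝒜 m - 𝒜 m * 𝒜 k) + (𝒜 m * 𝒜 j - 𝒜 j * 𝒜 m) = 0 :=
  have := IsAddTorsionFree.of_module_rat (Matrix (Fin d) (Fin d) ℂ)
  commutator_cycle3_eq_zero (commute_keyMatrix_sub hjk hjn hkm.symm hmn)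
    (commute_keyMatrix_sub hjn hjm hkn hkm) (commute_keyMatrix_sub hkn hjk.symm hmn hjm.symm)

theorem keyMatrix_commutator_cycle4 {j k m n : Fin d} (hjk : j ≠ k) (hjn : j ≠ n)
    (hkm : k ≠ m) (hmn : m ≠ n) :
    (𝒜 j * 𝒜 k - 𝒜 k * 𝒜 j) + (𝒜 k * 𝒜 m - 𝒜 m * 𝒜 k) + (𝒜 m * 𝒜 n - 𝒜 n * 𝒜 m) +
      (𝒜 n * 𝒜 j - 𝒜 j * 𝒜 n) = 0 :=
  commutator_cycle4_eq_zero (commute_keyMatrix_sub hjk hjn hkm.symm hmn)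

theorem keyMatrix_anticommutator_cycle4 {j k m n : Fin d} (hjk : j ≠ k) (hjn : j ≠ n)
    (hkm : k ≠ m) (hmn : m ≠ n) :
    (𝒜 j * 𝒜 k + 𝒜 k * 𝒜 j) - (𝒜 k * 𝒜 m + 𝒜 m * 𝒜 k) + (𝒜 m * 𝒜 n + 𝒜 n * 𝒜 m) -
      (𝒜 n * 𝒜 j + 𝒜 j * 𝒜 n) = 0 :=
  anticommutator_alternating_cycle4_eq_zero
    (keyMatrix_sub_mul_keyMatrix_sub hjk hjn hkm.symm hmn)
    (keyMatrix_sub_mul_keyMatrix_sub hjk.symm hkm hjn.symm hmn.symm)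

theorem not_linearIndependent_keyMatrix_commutators (hd : 4 ≤ d) :
    ¬ LinearIndependent ℂ (fun p : {p : Fin d × Fin d // p.1 < p.2} =>
      𝒜 p.1.1 * 𝒜 p.1.2 - 𝒜 p.1.2 * 𝒜 p.1.1) := by
  let i : Fin 4 → Fin d := Fin.castLE hd
  let P (a b : Fin 4) (h : a < b) : {p : Fin d × Fin d // p.1 < p.2} := ⟨(i a, i b), h⟩
  have hcycle := keyMatrix_commutator_cycle3 (j := i 0) (k := i 1) (m := i 2) (n := i 3)
    (by simp [i]) (by simp [i]) (by simp [i]) (by simp [i]) (by simp [i]) (by simp [i])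
  intro hli
  refine hli.notMem_span_image (s := {P 0 1 (by decide), P 1 2 (by decide)})
    (x := P 0 2 (by decide)) (by simp [P, i, Subtype.ext_iff]) ?_
  rw [Set.image_pair, Submodule.mem_span_pair]
  refine ⟨1, 1, ?_⟩
  rw [one_smul, one_smul, ← sub_eq_zero, ← hcycle]
  abel

theorem not_linearIndependent_keyMatrix_anticommutators (hd : 4 ≤ d) :
    ¬ LinearIndependent ℂ (fun p : {p : Fin d × Fin d // p.1 < p.2} =>
      𝒜 p.1.1 * 𝒜 p.1.2 + 𝒜 p.1.2 * 𝒜 p.1.1) := by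
  let i : Fin 4 → Fin d := Fin.castLE hd
  let P (a b : Fin 4) (h : a < b) : {p : Fin d × Fin d // p.1 < p.2} := ⟨(i a, i b), h⟩
  have hcycle := keyMatrix_anticommutator_cycle4 (j := i 0) (k := i 1) (m := i 2) (n := i 3)
    (by simp [i]) (by simp [i]) (by simp [i]) (by simp [i])
  intro hli
  refine hli.notMem_span_image (s := {P 0 1 (by decide), P 1 2 (by decide), P 2 3 (by decide)})
    (x := P 0 3 (by decide)) (by simp [P, i, Subtype.ext_iff]) ?_
  rw [Set.image_insert_eq, Set.image_pair, Submodule.mem_span_insert]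
  refine ⟨1, _, Submodule.mem_span_pair.2 ⟨-1, 1, rfl⟩, ?_⟩
  rw [one_smul, one_smul, neg_one_smul, eq_comm, ← sub_eq_zero, ← hcycle]
  abel

end KeyMatrix

/-- For `d ≥ 4` and `t = −1/(d−1)`: (a) the squares `{A_m²}` are linearly independent;
(b) for pairwise distinct `j,k,m,n` the stated commutator, anti-commutator and product
identities hold; consequently each of the families `{A_m A_n + A_n A_m}_{m<n}` and
`{A_m A_n − A_n A_m}_{m<n}` is linearly dependent. -/
theorem keyMatrix_special_t_relations (d : ℕ) (hd : 4 ≤ d) (t : ℝ)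
    (ht : t = -1 / ((d : ℝ) - 1)) :
    LinearIndependent ℂ (fun m : Fin d => keyMatrix d t m * keyMatrix d t m) ∧
    (∀ j k m n : Fin d, j ≠ k → j ≠ m → j ≠ n → k ≠ m → k ≠ n → m ≠ n →
      ((keyMatrix d t j * keyMatrix d t k - keyMatrix d t k * keyMatrix d t j) +
        (keyMatrix d t k * keyMatrix d t m - keyMatrix d t m * keyMatrix d t k) +
        (keyMatrix d t m * keyMatrix d t j - keyMatrix d t j * keyMatrix d t m) = 0 ∧
      (keyMatrix d t j * keyMatrix d t k - keyMatrix d t k * keyMatrix d t j) +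
        (keyMatrix d t k * keyMatrix d t m - keyMatrix d t m * keyMatrix d t k) +
        (keyMatrix d t m * keyMatrix d t n - keyMatrix d t n * keyMatrix d t m) +
        (keyMatrix d t n * keyMatrix d t j - keyMatrix d t j * keyMatrix d t n) = 0 ∧
      (keyMatrix d t j * keyMatrix d t k + keyMatrix d t k * keyMatrix d t j) -
        (keyMatrix d t k * keyMatrix d t m + keyMatrix d t m * keyMatrix d t k) +
        (keyMatrix d t m * keyMatrix d t n + keyMatrix d t n * keyMatrix d t m) -
        (keyMatrix d t n * keyMatrix d t j + keyMatrix d t j * keyMatrix d t n) = 0 ∧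
      (keyMatrix d t j - keyMatrix d t m) * (keyMatrix d t k - keyMatrix d t n) = 0)) ∧
    ¬ LinearIndependent ℂ (fun p : {p : Fin d × Fin d // p.1 < p.2} =>
      keyMatrix d t p.1.1 * keyMatrix d t p.1.2 + keyMatrix d t p.1.2 * keyMatrix d t p.1.1) ∧
    ¬ LinearIndependent ℂ (fun p : {p : Fin d × Fin d // p.1 < p.2} =>
      keyMatrix d t p.1.1 * keyMatrix d t p.1.2 - keyMatrix d t p.1.2 * keyMatrix d t p.1.1) := by
  subst ht
  refine ⟨linearIndependent_keyMatrix_mul_self (by omega), fun j k m n hjk hjm hjn hkm hkn hmn =>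
    ⟨keyMatrix_commutator_cycle3 hjk hjm hjn hkm hkn hmn,
      keyMatrix_commutator_cycle4 hjk hjn hkm hmn, keyMatrix_anticommutator_cycle4 hjk hjn hkm hmn,
      keyMatrix_sub_mul_keyMatrix_sub hjk hjn hkm.symm hmn⟩,
    not_linearIndependent_keyMatrix_anticommutators hd,
    not_linearIndependent_keyMatrix_commutators hd⟩

end
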